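/- The Gram matrix of the squared-exponential kernel at distinct points is positive definite: for distinct d_1,...,d_N ∈ ℝ^n and l > 0, the matrix K with K_{ij} = exp(-‖d_i - d_j‖²/(2l²)) is symmetric positive definite. -/

import Mathlib

open MeasureTheory Complex Matrix
open scoped RealInnerProductSpace ENNReal

noncomputable def seChi {n : ℕ} (w : EuclideanSpace ℝ (Fin n)) :
    Multiplicative (EuclideanSpace ℝ (Fin n)) →* ℂ where
  toFun v := Complex.exp (⟪w, Multiplicative.toAdd v⟫ * Complex.I)
  map_one' := by simp
  map_mul' v v' := by
    simp only [toAdd_mul, inner_add_right]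
    push_cast
    rw [add_mul, Complex.exp_add]

lemma seChi_injective {n : ℕ} : Function.Injective (seChi (n := n)) := by
  intro w w' h
  by_contra hne
  have hw : w - w' ≠ 0 := sub_ne_zero.mpr hne
  have hw' : ‖w - w'‖ ≠ 0 := norm_ne_zero_iff.mpr hw
  have ht : (0:ℝ) < ‖w - w'‖^2 := by positivity
  set v : EuclideanSpace ℝ (Fin n) := (Real.pi / ‖w - w'‖^2) • (w - w') with hv
  have h1 : ⟪w - w', v⟫ = Real.pi := by
    rw [hv, real_inner_smul_right, real_inner_self_eq_norm_sq]
    field_simp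
  have h2 := congrArg (fun f : Multiplicative (EuclideanSpace ℝ (Fin n)) →* ℂ =>
    f (Multiplicative.ofAdd v)) h
  simp only [seChi, MonoidHom.coe_mk, OneHom.coe_mk, toAdd_ofAdd] at h2
  have h3 : Complex.exp ((⟪w, v⟫ : ℂ) * Complex.I - (⟪w', v⟫ : ℂ) * Complex.I) = 1 := by
    rw [Complex.exp_sub, h2, div_self (Complex.exp_ne_zero _)]
  have h4 : ((⟪w, v⟫ : ℂ) * Complex.I - (⟪w', v⟫ : ℂ) * Complex.I) = Real.pi * Complex.I := by
    rw [← sub_mul]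
    congr 1
    rw [← h1, inner_sub_left]
    push_cast; ring
  rw [h4, Complex.exp_pi_mul_I] at h3
  norm_num at h3

set_option maxHeartbeats 1000000 in
/-- The Gram matrix of the squared-exponential kernel at distinct points is
symmetric positive definite. -/
theorem se_gram_matrix_posDef (n N : ℕ) (l : ℝ) (hl : 0 < l)
    (d : Fin N → EuclideanSpace ℝ (Fin n)) (hd : Function.Injective d) :
    (Matrix.of fun i j : Fin N =>
      Real.exp (-‖d i - d j‖ ^ 2 / (2 * l ^ 2))).PosDef := by
  constructor
  · ext i j
    simp only [Matrix.conjTranspose_apply, Matrix.of_apply, star_trivial, norm_sub_rev]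
  intro x hx
  have hl2 : (l:ℝ) ≠ 0 := ne_of_gt hl
  set b : ℂ := ((l^2/2 : ℝ) : ℂ) with hb_def
  have hb : 0 < b.re := by rw [hb_def, Complex.ofReal_re]; positivity
  set F : EuclideanSpace ℝ (Fin n) → ℂ :=
    fun v => ∑ j, (x j : ℂ) * Complex.exp ((⟪d j, v⟫ : ℂ) * Complex.I) with hF_def
  -- F is not identically zero
  have hlin : LinearIndependent ℂ
      (fun j : Fin N => ((seChi (d j)) : Multiplicative (EuclideanSpace ℝ (Fin n)) → ℂ)) :=
    (linearIndependent_monoidHom (Multiplicative (EuclideanSpace ℝ (Fin n))) ℂ).comp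
      (fun j => seChi (d j)) (fun j k hjk => hd (seChi_injective hjk))
  have hFne : ∃ v0 : EuclideanSpace ℝ (Fin n), F v0 ≠ 0 := by
    by_contra hc
    push_neg at hc
    have hz : ∀ j, (x j : ℂ) = 0 := by
      refine Fintype.linearIndependent_iff.mp hlin (fun j => (x j : ℂ)) ?_
      funext v'
      have h0 := hc (Multiplicative.toAdd v')
      rw [hF_def] at h0
      simp only [Pi.smul_apply, smul_eq_mul, Pi.zero_apply, Finset.sum_apply]
      rw [← h0]
      exact Finset.sum_congr rfl fun j _ => by simp [seChi]
    exact hx (Finsupp.ext fun j => by exact_mod_cast hz j)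
  -- continuity of F
  have hFcont : Continuous F := by
    refine continuous_finset_sum _ fun j _ => continuous_const.mul ?_
    exact Complex.continuous_exp.comp
      ((Complex.continuous_ofReal.comp (continuous_const.inner continuous_id)).mul continuous_const)
  -- complex integrand
  set h : EuclideanSpace ℝ (Fin n) → ℂ :=
    fun v => Complex.exp (-b * ‖v‖^2) * (F v * (starRingEnd ℂ) (F v)) with hh_def
  have h_eq : h = fun v => ∑ i, ∑ j, ((x i : ℂ) * (x j : ℂ)) *
      Complex.exp (-b * ‖v‖^2 + Complex.I * (⟪d i - d j, v⟫ : ℂ)) := by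
    funext v
    have hconj : (starRingEnd ℂ) (F v)
        = ∑ j, (x j : ℂ) * Complex.exp (-((⟪d j, v⟫ : ℂ) * Complex.I)) := by
      simp [hF_def, map_sum, _root_.map_mul, ← Complex.exp_conj, Complex.conj_ofReal, Complex.conj_I,
        mul_neg, neg_mul]
    rw [hh_def]
    simp only [hconj]
    simp only [hF_def]
    rw [Finset.sum_mul_sum, Finset.mul_sum]
    refine Finset.sum_congr rfl fun i _ => ?_
    rw [Finset.mul_sum]
    refine Finset.sum_congr rfl fun j _ => ?_
    rw [inner_sub_left]
    push_cast
    rw [show -b * (‖v‖:ℂ)^2 + Complex.I * ((⟪d i, v⟫:ℂ) - (⟪d j, v⟫:ℂ))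
        = (-b * (‖v‖:ℂ)^2) + ((⟪d i, v⟫:ℂ) * Complex.I + -((⟪d j, v⟫:ℂ) * Complex.I)) by ring,
      Complex.exp_add, Complex.exp_add]
    ring
  have h_int_term : ∀ w : EuclideanSpace ℝ (Fin n),
      Integrable (fun v : EuclideanSpace ℝ (Fin n) =>
        Complex.exp (-b * ‖v‖^2 + Complex.I * (⟪w, v⟫ : ℂ))) :=
    fun w => GaussianFourier.integrable_cexp_neg_mul_sq_norm_add hb Complex.I w
  have hInt : Integrable h := by
    rw [h_eq]
    exact integrable_finset_sum _ fun i _ =>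
      integrable_finset_sum _ fun j _ => ((h_int_term _).const_mul _)
  -- the real constant
  set r : ℝ := (Real.pi / (l^2/2)) ^ ((n:ℝ)/2) with hr_def
  have hrpos : 0 < r := Real.rpow_pos_of_pos (by positivity) _
  have hC : ((r : ℝ) : ℂ) = (↑Real.pi / b) ^ ((n : ℂ) / 2) := by
    rw [hr_def, Complex.ofReal_cpow (by positivity) ((n:ℝ)/2)]
    push_cast [hb_def]
    norm_num
  -- value of each integral
  have hval : ∀ w : EuclideanSpace ℝ (Fin n), ∫ v : EuclideanSpace ℝ (Fin n),
      Complex.exp (-b * ‖v‖^2 + Complex.I * (⟪w, v⟫ : ℂ))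
      = (r : ℂ) * ((Real.exp (-‖w‖^2 / (2*l^2)) : ℝ) : ℂ) := by
    intro w
    rw [GaussianFourier.integral_cexp_neg_mul_sq_norm_add hb Complex.I w]
    have hrank : ((Module.finrank ℝ (EuclideanSpace ℝ (Fin n)) : ℂ)) = (n : ℂ) := by
      norm_cast
      exact finrank_euclideanSpace_fin
    rw [hrank, ← hC]
    congr 1
    rw [Complex.ofReal_exp]
    congr 1
    rw [Complex.I_sq, hb_def]
    push_cast
    field_simp
    ring
  -- the quadratic form
  set Q : ℝ := ∑ i, ∑ j, x i * x j * Real.exp (-‖d i - d j‖^2 / (2*l^2)) with hQ_def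
  have hIntegralh : ∫ v : EuclideanSpace ℝ (Fin n), h v = ((r * Q : ℝ) : ℂ) := by
    rw [h_eq, integral_finset_sum _ fun i _ =>
      integrable_finset_sum _ fun j _ => ((h_int_term _).const_mul _)]
    have heach : ∀ i ∈ (Finset.univ : Finset (Fin N)),
        (∫ v : EuclideanSpace ℝ (Fin n), ∑ j, ((x i : ℂ) * (x j : ℂ)) *
          Complex.exp (-b * ‖v‖^2 + Complex.I * (⟪d i - d j, v⟫ : ℂ)))
        = ∑ j, ((x i : ℂ) * (x j : ℂ)) *
            ((r : ℂ) * ((Real.exp (-‖d i - d j‖^2 / (2*l^2)) : ℝ) : ℂ)) := by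
      intro i _
      rw [integral_finset_sum _ fun j _ => ((h_int_term _).const_mul _)]
      exact Finset.sum_congr rfl fun j _ => by rw [integral_const_mul, hval]
    rw [Finset.sum_congr rfl heach, hQ_def]
    push_cast
    rw [Finset.mul_sum]
    exact Finset.sum_congr rfl fun i _ => by
      rw [Finset.mul_sum]
      exact Finset.sum_congr rfl fun j _ => by ring
  -- real nonnegative integrand
  set g : EuclideanSpace ℝ (Fin n) → ℝ :=
    fun v => Real.exp (-(l^2/2) * ‖v‖^2) * Complex.normSq (F v) with hg_def
  have hgh : ∀ v, ((g v : ℝ) : ℂ) = h v := by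
    intro v
    simp only [hg_def, hh_def, Complex.mul_conj]
    rw [Complex.ofReal_mul, Complex.ofReal_exp]
    have harg : ((-(l^2/2) * ‖v‖^2 : ℝ) : ℂ) = -b * (‖v‖:ℂ)^2 := by
      rw [hb_def]; push_cast; ring
    rw [harg]
  have hIntg : Integrable g := by
    have hge : g = fun v => (h v).re := by
      funext v; rw [← hgh v, Complex.ofReal_re]
    rw [hge]; exact hInt.re
  have hIg : ∫ v : EuclideanSpace ℝ (Fin n), g v = r * Q := by
    have hcast : ((∫ v : EuclideanSpace ℝ (Fin n), g v : ℝ) : ℂ) = ((r * Q : ℝ) : ℂ) := by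
      have h1 : ((∫ v : EuclideanSpace ℝ (Fin n), g v : ℝ) : ℂ)
          = ∫ v : EuclideanSpace ℝ (Fin n), ((g v : ℝ) : ℂ) := (integral_ofReal).symm
      rw [h1, ← hIntegralh]
      exact integral_congr_ae (Filter.Eventually.of_forall hgh)
    exact_mod_cast hcast
  have hpos : 0 < ∫ v : EuclideanSpace ℝ (Fin n), g v := by
    rw [integral_pos_iff_support_of_nonneg
      (fun v => mul_nonneg (Real.exp_nonneg _) (Complex.normSq_nonneg _)) hIntg]
    obtain ⟨v0, hv0⟩ := hFne
    have hopen : IsOpen {v : EuclideanSpace ℝ (Fin n) | F v ≠ 0} :=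
      isOpen_compl_iff.mpr (isClosed_singleton.preimage hFcont)
    have hsub : {v : EuclideanSpace ℝ (Fin n) | F v ≠ 0} ⊆ Function.support g := by
      intro v hv
      simp only [Function.mem_support, hg_def]
      exact mul_ne_zero (Real.exp_ne_zero _) (fun hns => hv (Complex.normSq_eq_zero.mp hns))
    calc (0:ℝ≥0∞) < volume {v : EuclideanSpace ℝ (Fin n) | F v ≠ 0} :=
        hopen.measure_pos volume ⟨v0, hv0⟩
      _ ≤ volume (Function.support g) := measure_mono hsub
  rw [hIg] at hpos
  have hQpos : 0 < Q := by nlinarith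
  have hform : (x.sum fun i xi => x.sum fun j xj => star xi * (Matrix.of fun i j : Fin N =>
        Real.exp (-‖d i - d j‖ ^ 2 / (2 * l ^ 2))) i j * xj) = Q := by
    rw [hQ_def]
    rw [Finsupp.sum_fintype _ _ (by simp)]
    refine Finset.sum_congr rfl fun i _ => ?_
    rw [Finsupp.sum_fintype _ _ (by simp)]
    exact Finset.sum_congr rfl fun j _ => by simp only [Matrix.of_apply, star_trivial]; ring
  rw [hform]
  exact hQpos
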